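/- arXiv:2410.15706 — 2 statements merged into one kernel-verified Lean document; each statement's English description precedes it below -/
import Mathlib

section
/- (Identifiability of the interventional density, Theorem A.1, density form.) Under the factorized joint density f, fix x ∈ ℝ^n with 0 < M < ∞ where M := ∫_{ℝ^m} fZ(z)·fX(x,z) dz, and fix t ∈ ℝ with fT(t,z) > 0 for all z ∈ ℝ^m and fX(x,z) > 0, fZ(z) > 0 for all z. Then for every y ∈ ℝ, the backdoor adjustment formula computed purely from observational conditional densities recovers the interventional outcome density: ∫_{ℝ^m} [ f(x,z,t,y) / ∫_ℝ f(x,z,t,y') dy' ] · [ (∫_ℝ ∫_ℝ f(x,z,t',y') dt' dy') / (∫_{ℝ^m} ∫_ℝ ∫_ℝ f(x,z',t',y') dz' dt' dy') ] dz = (1/M) · ∫_{ℝ^m} fY(y,z,t)·fZ(z)·fX(x,z) dz. In particular the right-hand side does not depend on the treatment-assignment density fT. -/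
open MeasureTheory

/-!
Integrating the factorized joint density over `y` and then over `t` leaves `fZ z * fX x z`,
because `fY(·, z, t)` and `fT(·, z)` are probability densities. Hence the observational
conditional `f(x,z,t,y) / ∫ f(x,z,t,·)` is `fY(y,z,t)` wherever `fZ z * fX x z * fT t z ≠ 0`,
and the backdoor weight `p(x,z) / p(x)` is `fZ z * fX x z / M`, which vanishes where the
conditional is not `fY`; so, as long as `fT(t,·) ≠ 0`, the adjustment integrand is
`fY(y,z,t) * fZ z * fX x z / M`.
-/

theorem integral_const_mul_of_integral_eq_one {α : Type*} [MeasurableSpace α] {μ : Measure α}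
    {g : α → ℝ} (hg : ∫ a, g a ∂μ = 1) (c : ℝ) : ∫ a, c * g a ∂μ = c := by
  rw [integral_const_mul, hg, mul_one]

theorem mul_mul_div_mul_mul_div {K : Type*} [Field K] {c : K} (hc : c ≠ 0) (a b d : K) :
    a * c * b / (a * c) * (a / d) = b * a / d := by
  rcases eq_or_ne a 0 with rfl | ha
  · simp
  · field_simp

theorem interventional_density_identifiable_general
    (m n : ℕ)
    (fZ : (Fin m → ℝ) → ℝ)
    (fX : (Fin n → ℝ) → (Fin m → ℝ) → ℝ)
    (fT : ℝ → (Fin m → ℝ) → ℝ)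
    (fY : ℝ → (Fin m → ℝ) → ℝ → ℝ)
    (hfT : ∀ z, ∫ t, fT t z = 1)
    (hfY : ∀ z t, ∫ y, fY y z t = 1)
    (f : (Fin n → ℝ) → (Fin m → ℝ) → ℝ → ℝ → ℝ)
    (hf : ∀ x z t y, f x z t y = fZ z * fX x z * fT t z * fY y z t)
    (x : Fin n → ℝ)
    (M : ℝ) (hM : M = ∫ z, fZ z * fX x z)
    (t : ℝ)
    (hfTpos : ∀ z, 0 < fT t z) :
    ∀ y : ℝ,
      (∫ z : Fin m → ℝ,
          (f x z t y / ∫ y' : ℝ, f x z t y') *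
            ((∫ t' : ℝ, ∫ y' : ℝ, f x z t' y') /
              (∫ z' : Fin m → ℝ, ∫ t' : ℝ, ∫ y' : ℝ, f x z' t' y'))) =
        (1 / M) * ∫ z : Fin m → ℝ, fY y z t * fZ z * fX x z := by
  intro y
  have marginal_y (z : Fin m → ℝ) (t' : ℝ) :
      ∫ y', f x z t' y' = fZ z * fX x z * fT t' z := by
    simp only [hf]
    exact integral_const_mul_of_integral_eq_one (hfY z t') _
  have marginal_ty (z : Fin m → ℝ) : ∫ t', ∫ y', f x z t' y' = fZ z * fX x z := by
    simp only [marginal_y]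
    exact integral_const_mul_of_integral_eq_one (hfT z) _
  have marginal_zty : ∫ z', ∫ t', ∫ y', f x z' t' y' = M := by
    simp only [marginal_ty, hM]
  simp_rw [marginal_zty, marginal_ty, marginal_y, hf,
    mul_mul_div_mul_mul_div (hfTpos _).ne', ← mul_assoc]
  rw [integral_div, one_div, inv_mul_eq_div]

/-- Identifiability of the interventional density (Theorem A.1, density form):
the backdoor adjustment formula computed purely from observational conditional
densities recovers the interventional outcome density
`p(y | x, do(t)) = (1/M) * ∫ z, fY y z t * fZ z * fX x z`. -/
theorem interventional_density_identifiable
    (m n : ℕ) (hm : 1 ≤ m) (hn : 1 ≤ n)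
    (fZ : (Fin m → ℝ) → ℝ)
    (fX : (Fin n → ℝ) → (Fin m → ℝ) → ℝ)
    (fT : ℝ → (Fin m → ℝ) → ℝ)
    (fY : ℝ → (Fin m → ℝ) → ℝ → ℝ)
    (hfZmeas : Measurable fZ) (hfZnn : ∀ z, 0 ≤ fZ z)
    (hfZ : ∫ z, fZ z = 1)
    (hfXmeas : Measurable (fun p : (Fin n → ℝ) × (Fin m → ℝ) => fX p.1 p.2))
    (hfXnn : ∀ x z, 0 ≤ fX x z) (hfX : ∀ z, ∫ x, fX x z = 1)
    (hfTmeas : Measurable (fun p : ℝ × (Fin m → ℝ) => fT p.1 p.2))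
    (hfTnn : ∀ t z, 0 ≤ fT t z) (hfT : ∀ z, ∫ t, fT t z = 1)
    (hfYmeas : Measurable (fun p : ℝ × (Fin m → ℝ) × ℝ => fY p.1 p.2.1 p.2.2))
    (hfYnn : ∀ y z t, 0 ≤ fY y z t) (hfY : ∀ z t, ∫ y, fY y z t = 1)
    (f : (Fin n → ℝ) → (Fin m → ℝ) → ℝ → ℝ → ℝ)
    (hf : ∀ x z t y, f x z t y = fZ z * fX x z * fT t z * fY y z t)
    (x : Fin n → ℝ)
    (M : ℝ) (hM : M = ∫ z, fZ z * fX x z)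
    (hMpos : 0 < M)
    (hMfin : Integrable (fun z => fZ z * fX x z))
    (t : ℝ)
    (hfTpos : ∀ z, 0 < fT t z)
    (hfXpos : ∀ z, 0 < fX x z)
    (hfZpos : ∀ z, 0 < fZ z) :
    ∀ y : ℝ,
      (∫ z : Fin m → ℝ,
          (f x z t y / ∫ y' : ℝ, f x z t y') *
            ((∫ t' : ℝ, ∫ y' : ℝ, f x z t' y') /
              (∫ z' : Fin m → ℝ, ∫ t' : ℝ, ∫ y' : ℝ, f x z' t' y'))) =
        (1 / M) * ∫ z : Fin m → ℝ, fY y z t * fZ z * fX x z :=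
  interventional_density_identifiable_general m n fZ fX fT fY hfT hfY f hf x M hM t hfTpos
end

section
/- (Identifiability of the individual dose-response curve.) Under the factorized joint density f, fix x ∈ ℝ^n with 0 < M < ∞ where M := ∫_{ℝ^m} fZ(z)·fX(x,z) dz, and t ∈ ℝ with fZ(z) > 0, fX(x,z) > 0 and fT(t,z) > 0 for all z. Assume ∫_{ℝ^m} ∫_ℝ |y| · fY(y,z,t) · fZ(z) · fX(x,z) dy dz < ∞. Then the dose-response value μ(x,t) := ∫_ℝ y · p(y|x,do(t)) dy equals ∫_{ℝ^m} μ_Y(x,t,z) · π(z|x) dz, where μ_Y(x,t,z) := (∫_ℝ y · f(x,z,t,y) dy) / (∫_ℝ f(x,z,t,y) dy) is the observational conditional mean of Y given (X,Z,T) = (x,z,t) and π(z|x) := fZ(z)·fX(x,z)/M is the observational conditional density of Z given X = x; hence μ(x,t) is determined by the joint distribution p(X,Z,T,Y). -/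
open MeasureTheory

/-!
Since `fY(·,z,t)` is a probability density, `∫ y·f(x,z,t,y) dy / ∫ f(x,z,t,y) dy` is the mean of
`fY(·,z,t)`: the factor `fZ(z)·fX(x,z)·fT(t,z)` cancels because `fT(t,z) > 0`, and where
`fZ(z)·fX(x,z) = 0` the weight `π(z|x)` kills the term anyway. Both sides are then the two iterated
integrals of `y·fY(y,z,t)·fZ(z)·fX(x,z)`, equal by Fubini; this integrand is integrable, being
`sign y` times the integrand assumed integrable.
-/

theorem Real.sign_mul_abs (r : ℝ) : Real.sign r * |r| = r := by
  rcases lt_trichotomy r 0 with h | rfl | h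
  · simp [Real.sign_of_neg h, abs_of_neg h]
  · simp
  · simp [Real.sign_of_pos h, abs_of_pos h]

theorem Real.measurable_sign : Measurable Real.sign :=
  Measurable.ite measurableSet_Iio measurable_const
    (Measurable.ite measurableSet_Ioi measurable_const measurable_const)

theorem Measurable.integrable_of_abs_mul {α : Type*} [MeasurableSpace α] {μ : Measure α}
    {u h : α → ℝ} (hu : Measurable u) (hint : Integrable (fun a => |u a| * h a) μ) :
    Integrable (fun a => u a * h a) μ := by
  have hsign : ∀ a, ‖Real.sign (u a)‖ ≤ 1 := fun a => by
    rcases Real.sign_apply_eq (u a) with h | h | h <;> simp [h]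
  simpa only [Function.comp_apply, ← mul_assoc, Real.sign_mul_abs] using
    hint.bdd_mul (Real.measurable_sign.comp hu).aestronglyMeasurable (ae_of_all μ hsign)

theorem integral_mul_div_integral_mul_weight {g : ℝ → ℝ} (hg : ∫ y, g y = 1) {s : ℝ} (hs : s ≠ 0)
    (w : ℝ) : (∫ y, y * (w * s * g y)) / (∫ y, w * s * g y) * w = w * ∫ y, y * g y := by
  rcases eq_or_ne w 0 with rfl | hw
  · simp
  have hmean : ∫ y, y * (w * s * g y) = w * s * ∫ y, y * g y := by
    rw [← integral_const_mul]; congr 1; ext y; ring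
  rw [hmean, integral_const_mul, hg]
  field_simp

theorem dose_response_curve_identifiable_general
    (m n : ℕ)
    (fZ : (Fin m → ℝ) → ℝ)
    (fX : (Fin n → ℝ) → (Fin m → ℝ) → ℝ)
    (fT : ℝ → (Fin m → ℝ) → ℝ)
    (fY : ℝ → (Fin m → ℝ) → ℝ → ℝ)
    (hfY : ∀ z t, ∫ y, fY y z t = 1)
    (f : (Fin n → ℝ) → (Fin m → ℝ) → ℝ → ℝ → ℝ)
    (hf : ∀ x z t y, f x z t y = fZ z * fX x z * fT t z * fY y z t)
    (x : Fin n → ℝ)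
    (M : ℝ)
    (t : ℝ)
    (hfTpos : ∀ z, 0 < fT t z)
    (hint : Integrable (fun zy : (Fin m → ℝ) × ℝ =>
      |zy.2| * fY zy.2 zy.1 t * fZ zy.1 * fX x zy.1)) :
    (∫ y : ℝ, y * ((1 / M) * ∫ z : Fin m → ℝ, fY y z t * fZ z * fX x z)) =
      ∫ z : Fin m → ℝ,
        ((∫ y : ℝ, y * f x z t y) / (∫ y : ℝ, f x z t y)) *
          (fZ z * fX x z / M) := by
  have hjoint : Integrable (fun zy : (Fin m → ℝ) × ℝ =>
      zy.2 * (fY zy.2 zy.1 t * fZ zy.1 * fX x zy.1)) :=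
    measurable_snd.integrable_of_abs_mul (by simpa only [mul_assoc] using hint)
  calc (∫ y : ℝ, y * ((1 / M) * ∫ z : Fin m → ℝ, fY y z t * fZ z * fX x z))
      = (1 / M) * ∫ y : ℝ, ∫ z : Fin m → ℝ, y * (fY y z t * fZ z * fX x z) := by
        simp only [← integral_const_mul, mul_left_comm]
    _ = (1 / M) * ∫ z : Fin m → ℝ, ∫ y : ℝ, y * (fY y z t * fZ z * fX x z) := by
        rw [← integral_integral_swap hjoint]
    _ = (1 / M) * ∫ z : Fin m → ℝ, fZ z * fX x z * ∫ y : ℝ, y * fY y z t := by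
        simp only [← integral_const_mul, mul_comm, mul_left_comm]
    _ = _ := by
        rw [← integral_const_mul]
        congr 1; ext z
        simp only [hf]
        rw [mul_div_assoc', integral_mul_div_integral_mul_weight (hfY z t) (hfTpos z).ne']
        ring

/-- Identifiability of the individual dose-response curve:
`μ(x,t) = ∫ y, y * p(y|x,do(t)) dy` equals
`∫ z, μ_Y(x,t,z) * π(z|x) dz`, where `μ_Y` is the observational conditional mean of `Y`
given `(X,Z,T) = (x,z,t)` and `π(z|x) = fZ z * fX x z / M` is the observational
conditional density of `Z` given `X = x`. -/
theorem dose_response_curve_identifiable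
    (m n : ℕ) (hm : 1 ≤ m) (hn : 1 ≤ n)
    (fZ : (Fin m → ℝ) → ℝ)
    (fX : (Fin n → ℝ) → (Fin m → ℝ) → ℝ)
    (fT : ℝ → (Fin m → ℝ) → ℝ)
    (fY : ℝ → (Fin m → ℝ) → ℝ → ℝ)
    (hfZmeas : Measurable fZ) (hfZnn : ∀ z, 0 ≤ fZ z)
    (hfZ : ∫ z, fZ z = 1)
    (hfXmeas : Measurable (fun p : (Fin n → ℝ) × (Fin m → ℝ) => fX p.1 p.2))
    (hfXnn : ∀ x z, 0 ≤ fX x z) (hfX : ∀ z, ∫ x, fX x z = 1)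
    (hfTmeas : Measurable (fun p : ℝ × (Fin m → ℝ) => fT p.1 p.2))
    (hfTnn : ∀ t z, 0 ≤ fT t z) (hfT : ∀ z, ∫ t, fT t z = 1)
    (hfYmeas : Measurable (fun p : ℝ × (Fin m → ℝ) × ℝ => fY p.1 p.2.1 p.2.2))
    (hfYnn : ∀ y z t, 0 ≤ fY y z t) (hfY : ∀ z t, ∫ y, fY y z t = 1)
    (f : (Fin n → ℝ) → (Fin m → ℝ) → ℝ → ℝ → ℝ)
    (hf : ∀ x z t y, f x z t y = fZ z * fX x z * fT t z * fY y z t)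
    (x : Fin n → ℝ)
    (M : ℝ) (hM : M = ∫ z, fZ z * fX x z)
    (hMpos : 0 < M)
    (hMfin : Integrable (fun z => fZ z * fX x z))
    (t : ℝ)
    (hfZpos : ∀ z, 0 < fZ z)
    (hfXpos : ∀ z, 0 < fX x z)
    (hfTpos : ∀ z, 0 < fT t z)
    (hint : Integrable (fun zy : (Fin m → ℝ) × ℝ =>
      |zy.2| * fY zy.2 zy.1 t * fZ zy.1 * fX x zy.1)) :
    (∫ y : ℝ, y * ((1 / M) * ∫ z : Fin m → ℝ, fY y z t * fZ z * fX x z)) =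
      ∫ z : Fin m → ℝ,
        ((∫ y : ℝ, y * f x z t y) / (∫ y : ℝ, f x z t y)) *
          (fZ z * fX x z / M) :=
  dose_response_curve_identifiable_general m n fZ fX fT fY hfY f hf x M t hfTpos hint
end
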